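/- arXiv:2502.00967 — 8 statements merged into one kernel-verified Lean document; each statement's English description precedes it below -/
import Mathlib

section
/- In a partially additive field, two elements a, b are summable (a + b is defined) if and only if they have the same zero element, i.e., 0_a = 0_b. -/
/-- A partially additive field: partial addition (modeled via `Option`, `none` = undefined),
total multiplication, per-element zeros, etc. -/
structure PAF (Q : Type*) where
  add : Q → Q → Option Q
  mul : Q → Q → Q
  zero : Q → Q
  one : Q
  neg : Q → Q
  inv : Q → Q
  add_comm : ∀ a b, add a b = add b a
  mul_comm : ∀ a b, mul a b = mul b a
  add_assoc : ∀ a b c, (add a b).bind (fun x => add x c) = (add b c).bind (fun x => add a x)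
  mul_assoc : ∀ a b c, mul (mul a b) c = mul a (mul b c)
  left_distrib : ∀ a b c, (add b c).map (mul a) = add (mul a b) (mul a c)
  add_zero : ∀ a, add a (zero a) = some a
  zero_unique : ∀ a z, add a z = some a → z = zero a
  mul_one : ∀ a, mul a one = a
  add_neg : ∀ a, add a (neg a) = some (zero a)
  mul_inv : ∀ a, (¬ ∃ b, a = zero b) → mul a (inv a) = one
  nontrivial : ∀ a b, a = zero b → ∃ c, (¬ ∃ d, c = zero d) ∧ a = zero c

namespace PAF
variable {Q : Type*} (F : PAF Q)

/-- `a` is a zero element. -/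
def IsZero (a : Q) : Prop := ∃ b, a = F.zero b

/-- `a` and `b` are summable (their sum is defined). -/
def Summable (a b : Q) : Prop := (F.add a b).isSome

/-- `a` is dimensionless iff it is summable with `1`. -/
def Dimensionless (a : Q) : Prop := F.Summable a F.one

/-- `n`-th power via the total multiplication. -/
def pow (a : Q) : ℕ → Q
  | 0 => F.one
  | n + 1 => F.mul a (pow a n)

end PAF

section Aux
variable {Q : Type*} (F : PAF Q)

/-- If `a + b = some c` then `zero a = zero c`. -/
lemma paf_add_zero_eq {a b c : Q} (h : F.add a b = some c) : F.zero a = F.zero c := by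
  have h1 := F.add_assoc (F.zero a) a b
  rw [F.add_comm (F.zero a) a, F.add_zero, h] at h1
  simp only [Option.bind_some] at h1
  rw [h] at h1
  have : F.add c (F.zero a) = some c := by rw [F.add_comm]; exact h1.symm
  exact F.zero_unique c _ this

lemma paf_add_zero_eq' {a b c : Q} (h : F.add a b = some c) : F.zero b = F.zero c :=
  paf_add_zero_eq F (by rw [F.add_comm]; exact h)

lemma paf_zero_zero (a : Q) : F.zero (F.zero a) = F.zero a :=
  (paf_add_zero_eq F (by rw [F.add_comm]; exact F.add_zero a))

lemma paf_zero_neg (a : Q) : F.zero (F.neg a) = F.zero a := by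
  have := paf_add_zero_eq' F (F.add_neg a)
  rw [this, paf_zero_zero]

/-- If `zero a = zero b` then `neg a + b` is defined. -/
lemma paf_neg_summable {a b : Q} (h : F.zero a = F.zero b) :
    (F.add (F.neg a) b).isSome := by
  have h1 := F.add_assoc a (F.neg a) b
  rw [F.add_neg, Option.bind_some, h, F.add_comm (F.zero b) b, F.add_zero] at h1
  cases hd : F.add (F.neg a) b with
  | none => rw [hd] at h1; simp at h1
  | some d => simp [hd]

lemma paf_neg_add {a b : Q} (h : F.zero a = F.zero b) :
    ∃ d, F.add (F.neg a) b = some d ∧ F.add a d = some b := by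
  have h1 := F.add_assoc a (F.neg a) b
  rw [F.add_neg, Option.bind_some, h, F.add_comm (F.zero b) b, F.add_zero] at h1
  cases hd : F.add (F.neg a) b with
  | none => rw [hd] at h1; simp at h1
  | some d => rw [hd] at h1; exact ⟨d, rfl, h1.symm⟩

/-- Cancellation. -/
lemma paf_cancel {x y z w : Q} (hy : F.add x y = some w) (hz : F.add x z = some w) :
    y = z := by
  have key : ∀ v : Q, F.add x v = some w → F.add (F.neg x) w = some v := by
    intro v hv
    have h1 := F.add_assoc (F.neg x) x v
    rw [F.add_comm (F.neg x) x, F.add_neg, Option.bind_some, hv, Option.bind_some] at h1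
    have hz1 : F.zero x = F.zero v := (paf_add_zero_eq F hv).trans (paf_add_zero_eq' F hv).symm
    rw [hz1, F.add_comm (F.zero v) v, F.add_zero] at h1
    exact h1.symm
  have := (key y hy).symm.trans (key z hz)
  exact Option.some_injective _ this

lemma paf_neg_neg (a : Q) : F.neg (F.neg a) = a := by
  have h1 : F.add (F.neg a) (F.neg (F.neg a)) = some (F.zero a) := by
    rw [F.add_neg, paf_zero_neg]
  have h2 : F.add (F.neg a) a = some (F.zero a) := by
    rw [F.add_comm, F.add_neg]
  exact (paf_cancel F h2 h1).symm

end Aux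

/-- Two elements of a partially additive field are summable iff they have the same zero. -/
theorem summable_iff_zero_eq {Q : Type*} (F : PAF Q) (a b : Q) :
    F.Summable a b ↔ F.zero a = F.zero b := by
  constructor
  · intro h
    rw [PAF.Summable, Option.isSome_iff_exists] at h
    obtain ⟨c, hc⟩ := h
    rw [paf_add_zero_eq F hc, paf_add_zero_eq' F hc]
  · intro h
    have h' : F.zero (F.neg b) = F.zero a := by rw [paf_zero_neg, h]
    have := paf_neg_summable F h'
    rw [paf_neg_neg, F.add_comm] at this
    exact this
end

section
/- In a partially additive field, summability (the relation 'a + b is defined') is an equivalence relation on Q. -/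
/-!
Summability depends only on the zero: `a + b` is defined iff `0_a = 0_b`, and equality of zeros is
an equivalence relation. If `a + b = s`, associativity gives `s + 0_b = a + (b + 0_b) = s`, so
`0_b = 0_s` by uniqueness of zeros (and `0_a = 0_s` by commutativity). Conversely, if `0_a = 0_b`
then `(a + b) + (-b) = a + 0_b = a` is defined, so `a + b` must be.
-/

namespace PAF
variable {Q : Type*} (F : PAF Q)

lemma zero_right_eq_zero_of_add_eq_some {a b s : Q} (h : F.add a b = some s) :
    F.zero b = F.zero s := by
  apply F.zero_unique
  simpa only [h, F.add_zero, Option.bind_some] using F.add_assoc a b (F.zero b)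

lemma zero_left_eq_zero_of_add_eq_some {a b s : Q} (h : F.add a b = some s) :
    F.zero a = F.zero s :=
  F.zero_right_eq_zero_of_add_eq_some (F.add_comm b a ▸ h)

lemma summable_iff_zero_eq_zero (a b : Q) : F.Summable a b ↔ F.zero a = F.zero b := by
  constructor
  · intro h
    obtain ⟨s, hs⟩ := Option.isSome_iff_exists.mp h
    rw [F.zero_left_eq_zero_of_add_eq_some hs, F.zero_right_eq_zero_of_add_eq_some hs]
  · intro h
    have hassoc := F.add_assoc a b (F.neg b)
    rw [F.add_neg, Option.bind_some, ← h, F.add_zero] at hassoc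
    rw [Summable, Option.isSome_iff_ne_none]
    intro hnone
    simp [hnone] at hassoc

lemma summable_eq_invImage_zero : F.Summable = InvImage Eq F.zero := by
  funext a b
  exact propext (F.summable_iff_zero_eq_zero a b)

end PAF

/-- Summability is an equivalence relation on a partially additive field. -/
theorem summable_equivalence {Q : Type*} (F : PAF Q) :
    Equivalence F.Summable := by
  rw [F.summable_eq_invImage_zero]
  exact InvImage.equivalence Eq F.zero eq_equivalence
end

section
/- In a partially additive field, for any element a, the zero 0_a is the only zero element in the summability class F_a = {b ∈ Q : a + b is defined}. -/
/-- `0_a` is the only zero element in the summability class of `a`. -/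
theorem zero_unique_in_class {Q : Type*} (F : PAF Q) (a : Q) :
    ∀ c : Q, F.Summable a c → F.IsZero c → c = F.zero a := by
  rintro c hsum ⟨b, rfl⟩
  obtain ⟨s, hs⟩ := Option.isSome_iff_exists.mp hsum
  -- Step 1: 0_b + 0_b = 0_b
  have h1 := F.add_assoc b (F.zero b) (F.zero b)
  rw [F.add_zero b] at h1
  simp only [Option.bind_some, F.add_zero b] at h1
  have hzz : F.add (F.zero b) (F.zero b) = some (F.zero b) := by
    cases hx : F.add (F.zero b) (F.zero b) with
    | none => rw [hx] at h1; simp at h1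
    | some x =>
      rw [hx] at h1
      simp only [Option.bind_some] at h1
      exact congrArg some (F.zero_unique b x h1.symm)
  -- Step 2: s + 0_b = s, hence 0_b = zero s
  have h2 := F.add_assoc a (F.zero b) (F.zero b)
  rw [hs, hzz] at h2
  simp only [Option.bind_some, hs] at h2
  have hbs : F.zero b = F.zero s := F.zero_unique s _ h2
  -- Step 3: 0_a + s = s, hence 0_a = zero s
  have h3 := F.add_assoc (F.zero a) a (F.zero b)
  rw [F.add_comm (F.zero a) a, F.add_zero a, hs] at h3
  simp only [Option.bind_some, hs] at h3
  have has : F.zero a = F.zero s := F.zero_unique s _ (by rw [F.add_comm] at h3; exact h3.symm)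
  rw [hbs, has]
end

section
/- In a partially additive field, if a and b are dimensionless (i.e., summable with 1), then a + b, a × b, 0_a, −a are dimensionless, and if a is non-zero then a⁻¹ is dimensionless. -/
private lemma bind_eq_some_aux {Q : Type*} {o : Option Q} {f : Q → Option Q} {x : Q}
    (h : o.bind f = some x) : ∃ y, o = some y ∧ f y = some x := by
  cases o with
  | none => simp at h
  | some y => exact ⟨y, rfl, h⟩

/-- Dimensionless elements are closed under the operations. -/
theorem dimensionless_closed {Q : Type*} (F : PAF Q) (a b : Q)
    (ha : F.Dimensionless a) (hb : F.Dimensionless b) :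
    (∃ s : Q, F.add a b = some s ∧ F.Dimensionless s) ∧
    F.Dimensionless (F.mul a b) ∧
    F.Dimensionless (F.zero a) ∧
    F.Dimensionless (F.neg a) ∧
    (¬ F.IsZero a → F.Dimensionless (F.inv a)) := by
  obtain ⟨s, hs⟩ : ∃ s, F.add a F.one = some s := Option.isSome_iff_exists.mp ha
  obtain ⟨t, ht⟩ : ∃ t, F.add b F.one = some t := Option.isSome_iff_exists.mp hb
  -- distribute b over a + 1 :  b·a + b = b·s
  have hD1 : F.add (F.mul b a) b = some (F.mul b s) := by
    have h := F.left_distrib b a F.one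
    rw [hs, F.mul_one] at h
    simpa using h.symm
  -- distribute s over b + 1 :  b·s + s = s·t  (using mul_comm)
  have hD2 : F.add (F.mul b s) s = some (F.mul s t) := by
    have h := F.left_distrib s b F.one
    rw [ht, F.mul_one, F.mul_comm s b] at h
    simpa using h.symm
  -- associativity : (b·a + b) + s = b + s + ...
  have hA1 : (F.add b s).bind (fun x => F.add (F.mul b a) x) = some (F.mul s t) := by
    have h := F.add_assoc (F.mul b a) b s
    rw [hD1] at h
    simpa [hD2] using h.symm
  obtain ⟨v, hv, hbav⟩ := bind_eq_some_aux hA1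
  -- b + a defined, and its sum is dimensionless
  have hA2 : (F.add b a).bind (fun x => F.add x F.one) = some v := by
    have h := F.add_assoc b a F.one
    rw [hs] at h
    simpa [hv] using h
  obtain ⟨w, hw, hw1⟩ := bind_eq_some_aux hA2
  -- zero a = zero 1
  have hzas : F.add (F.zero a) s = some s := by
    have h := F.add_assoc (F.zero a) a F.one
    rw [F.add_comm (F.zero a) a, F.add_zero, hs] at h
    simpa [hs] using h.symm
  have hz1s : F.add (F.zero F.one) s = some s := by
    have h := F.add_assoc (F.zero F.one) F.one a
    rw [F.add_comm (F.zero F.one) F.one, F.add_zero] at h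
    simp only [Option.bind_some] at h
    rw [F.add_comm F.one a, hs] at h
    simpa using h.symm
  have hza : F.zero a = F.zero s := by
    apply F.zero_unique
    rw [F.add_comm]; exact hzas
  have hz1 : F.zero F.one = F.zero s := by
    apply F.zero_unique
    rw [F.add_comm]; exact hz1s
  have hzz : F.zero a = F.zero F.one := hza.trans hz1.symm
  refine ⟨⟨w, ?_, ?_⟩, ?_, ?_, ?_, ?_⟩
  · rw [F.add_comm]; exact hw
  · unfold PAF.Dimensionless PAF.Summable
    rw [hw1]; rfl
  · -- a·b is dimensionless
    have h1w : F.add F.one w = some v := by rw [F.add_comm]; exact hw1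
    have h := F.add_assoc (F.mul b a) F.one w
    rw [h1w] at h
    simp only [Option.bind_some, hbav] at h
    obtain ⟨y, hy, -⟩ := bind_eq_some_aux h
    unfold PAF.Dimensionless PAF.Summable
    rw [F.mul_comm a b, hy]; rfl
  · -- zero a is dimensionless
    unfold PAF.Dimensionless PAF.Summable
    rw [hzz, F.add_comm, F.add_zero]; rfl
  · -- neg a is dimensionless
    have hnas : F.add (F.neg a) s = some F.one := by
      have h := F.add_assoc (F.neg a) a F.one
      rw [F.add_comm (F.neg a) a, F.add_neg, hzz, hs] at h
      have h11 : F.add (F.zero F.one) F.one = some F.one := by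
        rw [F.add_comm]; exact F.add_zero F.one
      simpa [h11] using h.symm
    have h := F.add_assoc (F.neg a) F.one a
    rw [F.add_comm F.one a, hs] at h
    simp only [Option.bind_some, hnas] at h
    obtain ⟨y, hy, -⟩ := bind_eq_some_aux h
    unfold PAF.Dimensionless PAF.Summable
    rw [hy]; rfl
  · -- inv a is dimensionless for nonzero a
    intro hn
    have hi : F.mul a (F.inv a) = F.one := F.mul_inv a hn
    have h := F.left_distrib (F.inv a) a F.one
    rw [hs, F.mul_one, F.mul_comm (F.inv a) a, hi] at h
    unfold PAF.Dimensionless PAF.Summable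
    rw [F.add_comm, ← h]
    simp
end

section
/- In a partially additive field, the set of dimensionless elements (elements summable with 1) forms a field under the restricted addition and multiplication, with additive identity 0_1 and multiplicative identity 1. -/
namespace PAF
variable {Q : Type*} (F : PAF Q)

/-- Multiplying by a zero gives a zero. -/
lemma mul_zero' (a b : Q) : F.mul a (F.zero b) = F.zero (F.mul a b) := by
  have h := F.left_distrib a b (F.zero b)
  rw [F.add_zero] at h
  simp only [Option.map_some] at h
  exact F.zero_unique _ _ h.symm

lemma mul_zero_one (a : Q) : F.mul a (F.zero F.one) = F.zero a := by
  rw [F.mul_zero', F.mul_one]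

lemma zero_zero (b : Q) : F.zero (F.zero b) = F.zero b := by
  have h := F.add_assoc b (F.zero b) (F.zero (F.zero b))
  rw [F.add_zero, F.add_zero] at h
  simp only [Option.bind_some] at h
  rw [F.add_zero] at h
  exact F.zero_unique _ _ h

lemma zero_right_of_add {a b c : Q} (h : F.add a b = some c) : F.zero b = F.zero c := by
  have h2 := F.add_assoc a b (F.zero b)
  rw [F.add_zero, h] at h2
  simp only [Option.bind_some] at h2
  rw [h] at h2
  exact F.zero_unique _ _ h2

lemma zero_left_of_add {a b c : Q} (h : F.add a b = some c) : F.zero a = F.zero c := by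
  rw [F.add_comm] at h
  exact F.zero_right_of_add h

lemma dim_iff (a : Q) : F.Dimensionless a ↔ F.zero a = F.zero F.one := by
  constructor
  · intro h
    obtain ⟨s, hs⟩ := Option.isSome_iff_exists.mp h
    rw [F.zero_left_of_add hs, F.zero_right_of_add hs]
  · intro h
    have h2 := F.add_assoc a F.one (F.neg F.one)
    rw [F.add_neg] at h2
    simp only [Option.bind_some] at h2
    rw [← h, F.add_zero] at h2
    rcases hx : F.add a F.one with _ | s
    · rw [hx] at h2; simp at h2
    · exact Option.isSome_iff_exists.mpr ⟨_, hx⟩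

lemma add_isSome {a b : Q} (ha : F.zero a = F.zero F.one)
    (hb : F.zero b = F.zero F.one) : (F.add a b).isSome := by
  have h2 := F.add_assoc a b (F.neg b)
  rw [F.add_neg, hb] at h2
  simp only [Option.bind_some] at h2
  rw [← ha, F.add_zero] at h2
  rcases hx : F.add a b with _ | s
  · rw [hx] at h2; simp at h2
  · rfl

lemma zero_one_ne_one : F.zero F.one ≠ F.one := by
  intro h
  obtain ⟨c, hc, -⟩ := F.nontrivial (F.zero F.one) F.one rfl
  exact hc ⟨c, by rw [← F.mul_zero_one c, h, F.mul_one]⟩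

end PAF

/-- The dimensionless elements form a field under the restricted operations, with additive
identity `0₁` and multiplicative identity `1`. -/
theorem dimensionless_field {Q : Type*} (F : PAF Q) :
    ∃ inst : Field {a : Q // F.Dimensionless a},
      letI := inst
      (∀ x y : {a : Q // F.Dimensionless a}, F.add x.1 y.1 = some (x + y).1) ∧
      (∀ x y : {a : Q // F.Dimensionless a}, F.mul x.1 y.1 = (x * y).1) ∧
      ((0 : {a : Q // F.Dimensionless a}).1 = F.zero F.one) ∧
      ((1 : {a : Q // F.Dimensionless a}).1 = F.one) := by
  classical
  have key : ∀ a : {a : Q // F.Dimensionless a}, F.zero a.1 = F.zero F.one :=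
    fun a => (F.dim_iff a.1).mp a.2
  have mem : ∀ a : Q, F.zero a = F.zero F.one → F.Dimensionless a :=
    fun a h => (F.dim_iff a).mpr h
  letI instAdd : Add {a : Q // F.Dimensionless a} :=
    ⟨fun x y => ⟨(F.add x.1 y.1).get (F.add_isSome (key x) (key y)), by
      apply mem
      have hc : F.add x.1 y.1 = some ((F.add x.1 y.1).get (F.add_isSome (key x) (key y))) :=
        (Option.some_get _).symm
      rw [← F.zero_right_of_add hc, key y]⟩⟩
  have addEq : ∀ x y : {a : Q // F.Dimensionless a}, F.add x.1 y.1 = some (x + y).1 :=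
    fun x y => (Option.some_get _).symm
  letI instMul : Mul {a : Q // F.Dimensionless a} :=
    ⟨fun x y => ⟨F.mul x.1 y.1, by
      apply mem
      rw [← F.mul_zero', key y, F.mul_zero_one, key x]⟩⟩
  letI instZero : Zero {a : Q // F.Dimensionless a} :=
    ⟨⟨F.zero F.one, mem _ (F.zero_zero F.one)⟩⟩
  letI instOne : One {a : Q // F.Dimensionless a} := ⟨⟨F.one, mem _ rfl⟩⟩
  letI instNeg : Neg {a : Q // F.Dimensionless a} :=
    ⟨fun x => ⟨F.neg x.1, by
      apply mem
      rw [F.zero_right_of_add (F.add_neg x.1), F.zero_zero, key x]⟩⟩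
  have invmem : ∀ x : {a : Q // F.Dimensionless a}, x.1 ≠ F.zero F.one →
      F.Dimensionless (F.inv x.1) := by
    intro x h
    have notZ : ¬ ∃ b, x.1 = F.zero b := by
      rintro ⟨d, hd⟩
      exact h (by rw [hd, ← F.zero_zero d, ← hd, key x])
    have h1 : F.mul x.1 (F.inv x.1) = F.one := F.mul_inv _ notZ
    apply mem
    calc F.zero (F.inv x.1) = F.mul (F.inv x.1) (F.zero F.one) := (F.mul_zero_one _).symm
      _ = F.mul (F.inv x.1) (F.zero x.1) := by rw [key x]
      _ = F.zero (F.mul (F.inv x.1) x.1) := F.mul_zero' _ _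
      _ = F.zero F.one := by rw [F.mul_comm, h1]
  letI instInv : Inv {a : Q // F.Dimensionless a} :=
    ⟨fun x => dite (x.1 = F.zero F.one) (fun _ => (0 : {a : Q // F.Dimensionless a}))
      (fun h => ⟨F.inv x.1, invmem x h⟩)⟩
  have invSpec : ∀ (x : {a : Q // F.Dimensionless a}) (h : x.1 ≠ F.zero F.one),
      (x⁻¹ : {a : Q // F.Dimensionless a}) = ⟨F.inv x.1, invmem x h⟩ :=
    fun x h => dif_neg h
  have negAddCancel : ∀ x : {a : Q // F.Dimensionless a}, -x + x = 0 := by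
    intro x
    apply Subtype.ext
    have h : F.add (F.neg x.1) x.1 = some ((-x) + x).1 := addEq (-x) x
    rw [F.add_comm, F.add_neg, key x] at h
    exact (Option.some.inj h).symm
  have zeroAdd : ∀ x : {a : Q // F.Dimensionless a}, 0 + x = x := by
    intro x
    apply Subtype.ext
    have h : F.add (F.zero F.one) x.1 = some ((0 : {a : Q // F.Dimensionless a}) + x).1 :=
      addEq 0 x
    rw [F.add_comm, ← key x, F.add_zero] at h
    exact (Option.some.inj h).symm
  refine ⟨Field.ofMinimalAxioms _ ?_ zeroAdd negAddCancel ?_ ?_ ?_ ?_ ?_ ?_ ?_,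
    addEq, fun x y => rfl, rfl, rfl⟩
  · -- add_assoc
    intro x y z
    apply Subtype.ext
    have h := F.add_assoc x.1 y.1 z.1
    rw [addEq x y, addEq y z] at h
    simp only [Option.bind_some] at h
    rw [addEq (x + y) z, addEq x (y + z)] at h
    exact Option.some.inj h
  · -- mul_assoc
    intro x y z
    exact Subtype.ext (F.mul_assoc x.1 y.1 z.1)
  · -- mul_comm
    intro x y
    exact Subtype.ext (F.mul_comm x.1 y.1)
  · -- one_mul
    intro x
    exact Subtype.ext ((F.mul_comm F.one x.1).trans (F.mul_one x.1))
  · -- mul_inv_cancel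
    intro x hx
    have h1 : x.1 ≠ F.zero F.one := fun h => hx (Subtype.ext h)
    have notZ : ¬ ∃ b, x.1 = F.zero b := by
      rintro ⟨d, hd⟩
      exact h1 (by rw [hd, ← F.zero_zero d, ← hd, key x])
    apply Subtype.ext
    rw [invSpec x h1]
    exact F.mul_inv _ notZ
  · -- inv_zero
    exact dif_pos rfl
  · -- left_distrib
    intro x y z
    apply Subtype.ext
    have h := F.left_distrib x.1 y.1 z.1
    rw [addEq y z] at h
    simp only [Option.map_some] at h
    have h2 : F.add (F.mul x.1 y.1) (F.mul x.1 z.1) = some ((x * y) + (x * z)).1 :=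
      addEq (x * y) (x * z)
    exact Option.some.inj (h.trans h2)
  · -- exists_pair_ne
    exact ⟨0, 1, fun h => F.zero_one_ne_one (congrArg Subtype.val h)⟩
end

section
/- In a partially additive field with a unit system U (a set containing exactly one non-zero element from each summability equivalence class), every element a ∈ Q can be written uniquely as a = v × u with v dimensionless and u ∈ U. -/
namespace PAF
variable {Q : Type*} (F : PAF Q)

theorem summable_mul_left (c : Q) {a b : Q} (h : F.Summable a b) :
    F.Summable (F.mul c a) (F.mul c b) := by
  rwa [Summable, ← F.left_distrib, Option.isSome_map]

theorem inv_mul_cancel {u : Q} (hu : ¬ F.IsZero u) : F.mul (F.inv u) u = F.one := by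
  rw [F.mul_comm, F.mul_inv u hu]

theorem mul_inv_mul_cancel {u : Q} (hu : ¬ F.IsZero u) (a : Q) :
    F.mul (F.mul a (F.inv u)) u = a := by
  rw [F.mul_assoc, F.inv_mul_cancel hu, F.mul_one]

theorem mul_mul_inv_cancel {u : Q} (hu : ¬ F.IsZero u) (v : Q) :
    F.mul (F.mul v u) (F.inv u) = v := by
  rw [F.mul_assoc, F.mul_inv u hu, F.mul_one]

theorem dimensionless_mul_inv {a u : Q} (hu : ¬ F.IsZero u) (h : F.Summable a u) :
    F.Dimensionless (F.mul a (F.inv u)) := by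
  have h' := F.summable_mul_left (F.inv u) h
  rwa [F.mul_comm (F.inv u) a, F.inv_mul_cancel hu] at h'

theorem Dimensionless.summable_mul {v : Q} (hv : F.Dimensionless v) (u : Q) :
    F.Summable (F.mul v u) u := by
  have h := F.summable_mul_left u hv
  rwa [F.mul_comm u v, F.mul_one] at h

end PAF

/-- Every element factors uniquely as a dimensionless value times a unit from a unit system. -/
theorem value_unit_factorization {Q : Type*} (F : PAF Q) (U : Set Q)
    (hU_nonzero : ∀ u ∈ U, ¬ F.IsZero u)
    (hU_unique : ∀ a : Q, ∃! u : Q, u ∈ U ∧ F.Summable a u) :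
    ∀ a : Q, ∃! p : Q × Q, F.Dimensionless p.1 ∧ p.2 ∈ U ∧ a = F.mul p.1 p.2 := by
  intro a
  obtain ⟨u, ⟨huU, hau⟩, hu_unique⟩ := hU_unique a
  have hu := hU_nonzero u huU
  refine ⟨(F.mul a (F.inv u), u),
    ⟨F.dimensionless_mul_inv hu hau, huU, (F.mul_inv_mul_cancel hu a).symm⟩, ?_⟩
  rintro ⟨v, u'⟩ ⟨hv, hu'U, rfl⟩
  obtain rfl : u' = u := hu_unique u' ⟨hu'U, hv.summable_mul F u'⟩
  rw [F.mul_mul_inv_cancel hu]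
end

section
/- In a fieldoid, if two elements are summable (a + b is defined), then they are multipliable (a × b is defined). -/
/-!
Write `s = a + b`. Every element is squareable, so `s × (a + b)` is defined and distributivity
makes `s × a` defined; then `a × (a + b) = a × s` is defined, and distributivity once more makes
`a × b` defined. Squareability of a non-zero `a` comes from `a × (a × a⁻¹) = a × 1_a`; a zero is
`0_c` for some non-zero `c`, and `0_c × 0_c` is defined because `0_c × (c + 0_c) = 0_c × c` is,
which in turn follows from `0_c × (c × c⁻¹) = 0_c × 1_c = 0_c`.
-/

/-- A fieldoid: like a partially additive field, but both addition and multiplication are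
partial operations (modeled via `Option`, `none` = undefined). Each non-zero element has its
own multiplicative identity `1_a`. -/
structure Fieldoid (Q : Type*) where
  add : Q → Q → Option Q
  mul : Q → Q → Option Q
  zero : Q → Q
  one : Q → Q
  neg : Q → Q
  inv : Q → Q
  add_comm : ∀ a b, add a b = add b a
  mul_comm : ∀ a b, mul a b = mul b a
  add_assoc : ∀ a b c, (add a b).bind (fun x => add x c) = (add b c).bind (fun x => add a x)
  mul_assoc : ∀ a b c, (mul a b).bind (fun x => mul x c) = (mul b c).bind (fun x => mul a x)
  left_distrib : ∀ a b c, (add b c).bind (fun x => mul a x) =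
    (mul a b).bind (fun x => (mul a c).bind (fun y => add x y))
  add_zero : ∀ a, add a (zero a) = some a
  zero_unique : ∀ a z, add a z = some a → z = zero a
  mul_one : ∀ a, (¬ ∃ b, a = zero b) → mul a (one a) = some a
  one_unique : ∀ a e, (¬ ∃ b, a = zero b) → mul a e = some a → e = one a
  add_neg : ∀ a, add a (neg a) = some (zero a)
  mul_inv : ∀ a, (¬ ∃ b, a = zero b) → mul a (inv a) = some (one a)
  nontrivial : ∀ a b, a = zero b → ∃ c, (¬ ∃ d, c = zero d) ∧ a = zero c

namespace Fieldoid
variable {Q : Type*} (F : Fieldoid Q)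

/-- `a` is a zero element. -/
def IsZero (a : Q) : Prop := ∃ b, a = F.zero b

/-- `a` and `b` are summable (their sum is defined). -/
def Summable (a b : Q) : Prop := (F.add a b).isSome

/-- `a` and `b` are multipliable (their product is defined). -/
def Mulable (a b : Q) : Prop := (F.mul a b).isSome

variable {F}

theorem Mulable.symm {a b : Q} (h : F.Mulable a b) : F.Mulable b a := by
  rwa [Mulable, F.mul_comm]

theorem mulable_left_of_add_eq {a b c s : Q} (hs : F.add b c = some s) (h : F.Mulable a s) :
    F.Mulable a b := by
  have hd := F.left_distrib a b c
  rw [hs, Option.bind_some] at hd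
  unfold Mulable at h ⊢
  rw [hd] at h
  exact Option.isSome_of_isSome_bind h

theorem mulable_right_of_add_eq {a b c s : Q} (hs : F.add b c = some s) (h : F.Mulable a s) :
    F.Mulable a c :=
  mulable_left_of_add_eq (by rwa [F.add_comm]) h

theorem mulable_of_mul_eq {a b c d : Q} (hd : F.mul b c = some d) (h : F.Mulable a d) :
    F.Mulable a b := by
  have ha := F.mul_assoc a b c
  rw [hd, Option.bind_some] at ha
  unfold Mulable at h ⊢
  rw [← ha] at h
  exact Option.isSome_of_isSome_bind h

theorem mulable_self_of_not_isZero {a : Q} (ha : ¬F.IsZero a) : F.Mulable a a :=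
  mulable_of_mul_eq (F.mul_inv a ha) (by simp [Mulable, F.mul_one a ha])

theorem one_mul_zero {c : Q} (hc : ¬F.IsZero c) :
    F.mul (F.one c) (F.zero c) = some (F.zero c) := by
  have hd := F.left_distrib (F.one c) c (F.zero c)
  rw [F.add_zero, Option.bind_some, F.mul_comm, F.mul_one c hc, Option.bind_some] at hd
  obtain ⟨q, hq, hcq⟩ := Option.bind_eq_some_iff.mp hd.symm
  rw [hq, F.zero_unique c q hcq]

theorem mulable_zero_self {c : Q} (hc : ¬F.IsZero c) : F.Mulable (F.zero c) c :=
  mulable_of_mul_eq (F.mul_inv c hc) (by simp [Mulable, F.mul_comm _ (F.one c), one_mul_zero hc])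

theorem mulable_zero_zero {c : Q} (hc : ¬F.IsZero c) : F.Mulable (F.zero c) (F.zero c) :=
  mulable_right_of_add_eq (F.add_zero c) (mulable_zero_self hc)

theorem mulable_self (a : Q) : F.Mulable a a := by
  by_cases ha : F.IsZero a
  · obtain ⟨b, hb⟩ := ha
    obtain ⟨c, hc, rfl⟩ := F.nontrivial a b hb
    exact mulable_zero_zero hc
  · exact mulable_self_of_not_isZero ha

end Fieldoid

/-- In a fieldoid, summable elements are multipliable. -/
theorem summable_mulable {Q : Type*} (F : Fieldoid Q) (a b : Q) :
    F.Summable a b → F.Mulable a b := by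
  intro h
  obtain ⟨s, hs⟩ := Option.isSome_iff_exists.mp h
  have has : F.Mulable a s := (Fieldoid.mulable_left_of_add_eq hs (Fieldoid.mulable_self s)).symm
  exact Fieldoid.mulable_right_of_add_eq hs has
end

section
/- In a fieldoid, there are no zero divisors: if a and b are non-zero elements and a × b is defined, then a × b is not a zero element. -/
/-!
By nontriviality a zero element `c` is `0_{c'}` for some non-zero `c'`. If `a · b = c`, then
`1_a · 0_{c'} = c` is defined, hence so is `1_a · c'`, and it cannot be zero; identities propagate
along products of non-zero elements, so `1_a = 1_{c'}`, and likewise `1_b = 1_{c'}`. Then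
`a = a · 1_b = (a · b) · b⁻¹ = c · b⁻¹` would be zero.
-/

namespace Fieldoid

variable {Q : Type*} (F : Fieldoid Q)

theorem zero_eq_self_of_isZero {z : Q} (hz : F.IsZero z) : F.zero z = z := by
  obtain ⟨w, rfl⟩ := hz
  have hw : F.add w (F.zero w) = some w := F.add_zero w
  have hassoc := F.add_assoc w (F.zero w) (F.zero w)
  rw [hw, Option.bind_some, hw, eq_comm, Option.bind_eq_some_iff] at hassoc
  obtain ⟨y, hy, hwy⟩ := hassoc
  rw [F.zero_unique w y hwy] at hy
  exact (F.zero_unique _ _ hy).symm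

theorem mul_zero_eq_zero_of_mul_eq {p q r : Q} (h : F.mul p q = some r) :
    F.mul p (F.zero q) = some (F.zero r) := by
  have hdistrib := F.left_distrib p q (F.zero q)
  rw [F.add_zero, Option.bind_some, h, Option.bind_some, eq_comm,
    Option.bind_eq_some_iff] at hdistrib
  obtain ⟨t, ht, hrt⟩ := hdistrib
  rw [ht, F.zero_unique r t hrt]

theorem isZero_of_zero_mul_eq {x z w : Q} (hz : F.IsZero z) (h : F.mul z x = some w) :
    F.IsZero w := by
  have hzero := F.mul_zero_eq_zero_of_mul_eq (F.mul_comm z x ▸ h)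
  rw [F.zero_eq_self_of_isZero hz, F.mul_comm, h, Option.some_inj] at hzero
  exact ⟨w, hzero⟩

/-- Distribute `p` over `0_q = q + (-q)`. -/
theorem exists_mul_eq_of_mul_zero_eq {p q z : Q} (h : F.mul p (F.zero q) = some z) :
    ∃ r, F.mul p q = some r ∧ z = F.zero r := by
  have hdistrib := F.left_distrib p q (F.neg q)
  rw [F.add_neg, Option.bind_some, h, eq_comm, Option.bind_eq_some_iff] at hdistrib
  obtain ⟨r, hr, -⟩ := hdistrib
  refine ⟨r, hr, ?_⟩
  rw [F.mul_zero_eq_zero_of_mul_eq hr, Option.some_inj] at h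
  exact h.symm

/-- `M · (x + 1_M) = 0_M + M = M` forces `x + 1_M = 1_M`. -/
theorem isZero_of_mul_eq_zero {M x : Q} (hM : ¬ F.IsZero M)
    (h : F.mul M x = some (F.zero M)) : F.IsZero x := by
  have hdistrib := F.left_distrib M x (F.one M)
  rw [h, Option.bind_some, F.mul_one M hM, Option.bind_some, F.add_comm (F.zero M), F.add_zero,
    Option.bind_eq_some_iff] at hdistrib
  obtain ⟨s, hs, hMs⟩ := hdistrib
  rw [F.one_unique M s hM hMs, F.add_comm] at hs
  exact ⟨F.one M, F.zero_unique _ _ hs⟩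

theorem one_mul_eq_of_mul_eq {x y w : Q} (hx : ¬ F.IsZero x) (h : F.mul x y = some w) :
    F.mul (F.one x) w = some w := by
  have hassoc := F.mul_assoc (F.one x) x y
  rwa [F.mul_comm, F.mul_one x hx, Option.bind_some, h, Option.bind_some, eq_comm] at hassoc

theorem one_eq_one_of_mul_eq {x y w : Q} (hx : ¬ F.IsZero x) (hw : ¬ F.IsZero w)
    (h : F.mul x y = some w) : F.one x = F.one w :=
  F.one_unique w (F.one x) hw (F.mul_comm w _ ▸ F.one_mul_eq_of_mul_eq hx h)

theorem one_not_isZero {x : Q} (hx : ¬ F.IsZero x) : ¬ F.IsZero (F.one x) := by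
  intro hone
  have hzero := F.mul_zero_eq_zero_of_mul_eq (F.mul_one x hx)
  rw [F.zero_eq_self_of_isZero hone, F.mul_one x hx, Option.some_inj] at hzero
  exact hx ⟨x, hzero⟩

theorem one_one {x : Q} (hx : ¬ F.IsZero x) : F.one (F.one x) = F.one x :=
  F.one_eq_one_of_mul_eq (F.one_not_isZero hx) hx (F.mul_comm _ x ▸ F.mul_one x hx)

theorem one_eq_one_of_mul_zero_eq_zero {x y : Q} (hx : ¬ F.IsZero x) (hy : ¬ F.IsZero y)
    (h : F.mul x (F.zero y) = some (F.zero y)) : F.one x = F.one y := by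
  obtain ⟨p, hp, hyp⟩ := F.exists_mul_eq_of_mul_zero_eq h
  by_cases hp0 : F.IsZero p
  · rw [← F.zero_eq_self_of_isZero hp0, ← hyp, F.mul_comm] at hp
    exact absurd (F.isZero_of_mul_eq_zero hy hp) hx
  · rw [F.one_eq_one_of_mul_eq hx hp0 hp,
      F.one_eq_one_of_mul_eq hy hp0 (F.mul_comm y x ▸ hp)]

/-- `1_x` fixes `x · z = 0_y`, so `1_x · 0_y = 0_y`. -/
theorem one_eq_one_of_mul_eq_zero {x y z : Q} (hx : ¬ F.IsZero x) (hy : ¬ F.IsZero y)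
    (h : F.mul x z = some (F.zero y)) : F.one x = F.one y := by
  rw [← F.one_one hx]
  exact F.one_eq_one_of_mul_zero_eq_zero (F.one_not_isZero hx) hy (F.one_mul_eq_of_mul_eq hx h)

end Fieldoid

/-- A fieldoid has no zero divisors: a defined product of non-zero elements is non-zero. -/
theorem no_zero_divisors_fieldoid {Q : Type*} (F : Fieldoid Q) (a b : Q)
    (ha : ¬ F.IsZero a) (hb : ¬ F.IsZero b) :
    ∀ c : Q, F.mul a b = some c → ¬ F.IsZero c := by
  intro c hab hc
  obtain ⟨d, hcd⟩ := hc
  obtain ⟨c', hc', hcc'⟩ := F.nontrivial c d hcd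
  have hone_a : F.one a = F.one c' :=
    F.one_eq_one_of_mul_eq_zero ha hc' (hcc' ▸ hab)
  have hone_b : F.one b = F.one c' :=
    F.one_eq_one_of_mul_eq_zero hb hc' (hcc' ▸ F.mul_comm a b ▸ hab)
  -- `c · b⁻¹ = a · (b · b⁻¹) = a · 1_a = a`
  have hassoc := F.mul_assoc a b (F.inv b)
  rw [hab, Option.bind_some, F.mul_inv b hb, Option.bind_some, hone_b, ← hone_a,
    F.mul_one a ha] at hassoc
  exact ha (F.isZero_of_zero_mul_eq ⟨d, hcd⟩ hassoc)
end
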